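/- Let 𝒫 be a partial clustering, let (P'_i)_{i∈[k]} be an extension of 𝒫 with associated centers (c'_i), and fix i, j ∈ [k] with |I_i| ≥ Δ + 1 and I_j = ∅ (so that c'_j = c(P'_j)). Let Z_{i,j} ⊆ I_i with Z_{i,j} ≠ I_i be compatible with (P'_i). Let i_{j,min} ∈ I_i − Z_{i,j} minimize d^{e}(u_i, c'_j) over e ∈ I_i − Z_{i,j}, let r_1,…,r_Δ be Δ coordinates of I_i − {i_{j,min}} achieving the Δ largest values of d^{e}(u_i, c'_j) over e ∈ I_i − {i_{j,min}}, set I_{i,j} = I_i − {r_1,…,r_Δ}, and set d^j = d^{I_{i,j}}(u_i, c'_j). If d^j > 0, then every x ∈ P'_j with Dom(x) ⊆ I_i satisfies d(x, u_i) > d^j/4. -/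

import Mathlib

open Finset

namespace KMD

/-- A point in `ℍ^d`: each coordinate is either a real number or missing (`none`). -/
abbrev HPt (d : ℕ) := Fin d → Option ℝ

variable {d : ℕ}

/-- The domain of a point: the set of coordinates where it is specified. -/
noncomputable def Dom (x : HPt d) : Finset (Fin d) := Finset.univ.filter fun i => x i ≠ none

/-- The number of missing coordinates of a point. -/
noncomputable def numMissing (x : HPt d) : ℕ := (Finset.univ.filter fun i => x i = none).card

/-- A `Δ`-point: at most `Δ` coordinates are missing. -/
def IsDeltaPt (Δ : ℕ) (x : HPt d) : Prop := numMissing x ≤ Δ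

/-- `(a - b)^2`, with the convention that it is `0` when either entry is missing. -/
def coordSq : Option ℝ → Option ℝ → ℝ
  | some a, some b => (a - b) ^ 2
  | _, _ => 0

/-- `d^I(x,y)`. -/
noncomputable def dI (I : Finset (Fin d)) (x y : HPt d) : ℝ :=
  Real.sqrt (∑ i ∈ I, coordSq (x i) (y i))

/-- `d(x,y) = d^{[d]}(x,y)`. -/
noncomputable def dH (x y : HPt d) : ℝ := dI Finset.univ x y

/-- `PD(S, I)`: points of `S` partially defined on `I`. -/
noncomputable def PD (S : Finset (HPt d)) (I : Finset (Fin d)) : Finset (HPt d) :=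
  S.filter fun x => (Dom x ∩ I).Nonempty

/-- `FD(S, I)`: points of `S` fully defined on `I`. -/
noncomputable def FD (S : Finset (HPt d)) (I : Finset (Fin d)) : Finset (HPt d) :=
  S.filter fun x => Dom x ⊆ I

/-- The mean `c^I(P)` of `P` on the coordinates of `I` (unspecified outside `I`). -/
noncomputable def cI (I : Finset (Fin d)) (P : Finset (HPt d)) : HPt d := fun i =>
  if i ∈ I ∧ (PD P {i}).Nonempty then
    some ((∑ x ∈ PD P {i}, (x i).getD 0) / (PD P {i}).card)
  else none

/-- `c(P) = c^{[d]}(P)`. -/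
noncomputable def cP (P : Finset (HPt d)) : HPt d := cI Finset.univ P

/-- `f^I_2(X, y) = Σ_{x ∈ X} d^I(x,y)^2`. -/
noncomputable def f2I (I : Finset (Fin d)) (X : Finset (HPt d)) (y : HPt d) : ℝ :=
  ∑ x ∈ X, dI I x y ^ 2

/-- `f_2 = f^{[d]}_2`. -/
noncomputable def f2 (X : Finset (HPt d)) (y : HPt d) : ℝ := f2I Finset.univ X y

/-- A partial clustering of the instance `P` of `Δ`-points, with `k` clusters. -/
structure PartialClustering (d Δ k : ℕ) (P : Finset (HPt d)) where
  n : Fin k → ℕ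
  H : Fin k → Finset (HPt d)
  I : Fin k → Finset (Fin d)
  u : Fin k → HPt d
  H_sub : ∀ i, H i ⊆ P
  n_le : ∀ i, n i ≤ Δ + 1
  dom_u : ∀ i, Dom (u i) = I i
  I_card : ∀ i, 0 < n i → d - Δ + (n i - 1) ≤ (I i).card
  I_empty : ∀ i, n i = 0 → I i = ∅
  H_empty : ∀ i, n i = 0 → H i = ∅

variable {Δ k : ℕ} {P : Finset (HPt d)}

/-- `R = P − ∪_i H_i`: the points not yet assigned to a cluster. -/
noncomputable def Rset (pc : PartialClustering d Δ k P) : Finset (HPt d) :=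
  P \ Finset.univ.biUnion pc.H

/-- An extension of a partial clustering: a partition `(Q i)` of `P` with `H i ⊆ Q i`. -/
def IsExtension (pc : PartialClustering d Δ k P) (Q : Fin k → Finset (HPt d)) : Prop :=
  (∀ i, pc.H i ⊆ Q i) ∧ (∀ i, Q i ⊆ P) ∧
    (∀ i j, i ≠ j → Disjoint (Q i) (Q j)) ∧ ∀ x ∈ P, ∃ i, x ∈ Q i

/-- The centers associated with an extension: `c'_i` agrees with `u i` on `I i`
and with the mean of `Q i` outside `I i`. -/
noncomputable def centers (pc : PartialClustering d Δ k P)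
    (Q : Fin k → Finset (HPt d)) (i : Fin k) : HPt d :=
  fun r => if r ∈ pc.I i then pc.u i r else cP (Q i) r

/-- The value of an extension. -/
noncomputable def extVal (pc : PartialClustering d Δ k P)
    (Q : Fin k → Finset (HPt d)) : ℝ :=
  ∑ i, f2 (Q i) (centers pc Q i)

/-- `OPT(pc)`: the minimum value over all extensions of `pc`. -/
noncomputable def OPT (pc : PartialClustering d Δ k P) : ℝ :=
  sInf (extVal pc '' {Q | IsExtension pc Q})

/-- An optimal extension. -/
def IsOptimalExtension (pc : PartialClustering d Δ k P)
    (Q : Fin k → Finset (HPt d)) : Prop :=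
  IsExtension pc Q ∧ ∀ Q', IsExtension pc Q' → extVal pc Q ≤ extVal pc Q'

/-- A safe extension. -/
def IsSafe (pc : PartialClustering d Δ k P) (Q : Fin k → Finset (HPt d)) : Prop :=
  ∀ x ∈ Rset pc, ∀ i j : Fin k, Dom x ⊆ pc.I i → Dom x ⊆ pc.I j → x ∈ Q i →
    dH x (centers pc Q i) ≤ dH x (centers pc Q j)

/-- `Z` is a `t`-useless set of coordinates for the pair `(i,j)` and extension `Q`.
For pairs with `I i = ∅` or `I j ≠ ∅` it is by definition the empty set. -/
def IsUseless (pc : PartialClustering d Δ k P) (Q : Fin k → Finset (HPt d))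
    (t : ℝ) (i j : Fin k) (Z : Finset (Fin d)) : Prop :=
  Z ⊆ pc.I i ∧
  (((pc.I i).Nonempty ∧ pc.I j = ∅) →
    (Z = ∅ ∨ d - Δ ≤ Z.card) ∧
    f2I Z (Q j ∩ Rset pc) (pc.u i) - f2I Z (Q j ∩ Rset pc) (centers pc Q j)
      ≤ t * OPT pc) ∧
  (¬ ((pc.I i).Nonempty ∧ pc.I j = ∅) → Z = ∅)

/-- `Z` is compatible with the extension `Q` (for the pair `(i,j)`). -/
def Compatible (pc : PartialClustering d Δ k P) (Q : Fin k → Finset (HPt d))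
    (i j : Fin k) (Z : Finset (Fin d)) : Prop :=
  (∀ x ∈ Q j, ¬ Dom x ⊆ pc.I j → ¬ Dom x ⊆ Z) ∧
  (∀ x ∈ Q j, Dom x ⊆ pc.I i → ¬ dH x (pc.u i) < dH x (centers pc Q j) / 2)

open scoped Classical in
/-- The elements of `FD(S, I)` at distance at most `ρ` from `u`. -/
noncomputable def ballFD (S : Finset (HPt d)) (I : Finset (Fin d))
    (u : HPt d) (ρ : ℝ) : Finset (HPt d) :=
  (FD S I).filter fun x => dH x u ≤ ρ

/-!
Write `g e` for the squared gap between `u_i` and `c'_j` on coordinate `e` and `R` for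
`{r_1, …, r_Δ}`, so that `d_j² = ∑_{e ∈ I_i \ R} g e`. The point `x` misses at most `Δ = |R|`
coordinates, and its domain meets `I_i \ Z`, on which `g ≥ g i_min`; hence discarding the `Δ`
largest values of `g` off `i_min` leaves a sum bounded by `∑_{e ∈ Dom x} g e`, i.e.
`d_j ≤ d^{Dom x}(u_i, c'_j)`. The triangle inequality through `x` and compatibility,
`d(x, c'_j) ≤ 2 d(x, u_i)`, then give `d_j ≤ 3 d(x, u_i)`.
-/

lemma coordSq_nonneg (a b : Option ℝ) : 0 ≤ coordSq a b := by
  cases a <;> cases b <;> simp [coordSq, sq_nonneg]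

lemma coordSq_comm (a b : Option ℝ) : coordSq a b = coordSq b a := by
  cases a <;> cases b <;> simp [coordSq, sub_sq_comm]

lemma coordSq_le_sq_sqrt_add_sqrt (a b : Option ℝ) (t : ℝ) :
    coordSq a b ≤ (√(coordSq a (some t)) + √(coordSq (some t) b)) ^ 2 := by
  cases a with
  | none => simp only [coordSq]; positivity
  | some a =>
    cases b with
    | none => simp only [coordSq]; positivity
    | some b =>
      simp only [coordSq, Real.sqrt_sq_eq_abs]
      calc (a - b) ^ 2 = |a - b| ^ 2 := (sq_abs _).symm
        _ ≤ (|a - t| + |t - b|) ^ 2 := by gcongr; exact abs_sub_le a t b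

lemma dI_singleton (e : Fin d) (x y : HPt d) : dI {e} x y = √(coordSq (x e) (y e)) := by
  simp [dI]

lemma dI_singleton_le_iff {a b : Fin d} {x y : HPt d} :
    dI {a} x y ≤ dI {b} x y ↔ coordSq (x a) (y a) ≤ coordSq (x b) (y b) := by
  rw [dI_singleton, dI_singleton, Real.sqrt_le_sqrt_iff (coordSq_nonneg _ _)]

lemma dI_mono {I J : Finset (Fin d)} (h : I ⊆ J) (x y : HPt d) : dI I x y ≤ dI J x y :=
  Real.sqrt_le_sqrt (sum_le_sum_of_subset_of_nonneg h fun _ _ _ => coordSq_nonneg _ _)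

lemma dI_comm (I : Finset (Fin d)) (x y : HPt d) : dI I x y = dI I y x := by
  simp only [dI, coordSq_comm (x _)]

lemma dI_le_dH (I : Finset (Fin d)) (x y : HPt d) : dI I x y ≤ dH x y :=
  dI_mono (subset_univ I) x y

lemma _root_.Real.sqrt_sum_add_sq_le {ι : Type*} (s : Finset ι) (p q : ι → ℝ) :
    √(∑ e ∈ s, (p e + q e) ^ 2) ≤ √(∑ e ∈ s, p e ^ 2) + √(∑ e ∈ s, q e ^ 2) := by
  simpa [Real.sqrt_eq_rpow, Real.rpow_two, sq_abs] using Real.Lp_add_le s p q one_le_two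

/-- Only the middle point needs to be specified on `S`, since a missing coordinate of `u` or `c`
contributes `0` to the left side. -/
lemma dI_triangle {S : Finset (Fin d)} {u x c : HPt d} (hS : ∀ e ∈ S, x e ≠ none) :
    dI S u c ≤ dI S u x + dI S x c := by
  set p : Fin d → ℝ := fun e => √(coordSq (u e) (x e))
  set q : Fin d → ℝ := fun e => √(coordSq (x e) (c e))
  have hpoint : ∀ e ∈ S, coordSq (u e) (c e) ≤ (p e + q e) ^ 2 := by
    intro e he
    obtain ⟨t, ht⟩ := Option.ne_none_iff_exists'.mp (hS e he)
    simpa only [p, q, ht] using coordSq_le_sq_sqrt_add_sqrt (u e) (c e) t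
  have hsq : ∀ f : Fin d → ℝ, (∀ e, 0 ≤ f e) → ∑ e ∈ S, √(f e) ^ 2 = ∑ e ∈ S, f e :=
    fun f hf => sum_congr rfl fun e _ => Real.sq_sqrt (hf e)
  calc dI S u c ≤ √(∑ e ∈ S, (p e + q e) ^ 2) := Real.sqrt_le_sqrt (sum_le_sum hpoint)
    _ ≤ √(∑ e ∈ S, p e ^ 2) + √(∑ e ∈ S, q e ^ 2) := Real.sqrt_sum_add_sq_le S p q
    _ = dI S u x + dI S x c := by
      rw [hsq _ fun _ => coordSq_nonneg _ _, hsq _ fun _ => coordSq_nonneg _ _]; rfl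

lemma card_sdiff_dom_le_numMissing (I : Finset (Fin d)) (x : HPt d) :
    #(I \ Dom x) ≤ numMissing x :=
  card_le_card fun e he => by simpa [Dom] using (mem_sdiff.mp he).2

lemma sum_le_sum_of_card_le_of_forall_le {α : Type*} {g : α → ℝ} {M B : Finset α}
    (hg : ∀ b ∈ B, 0 ≤ g b) (hcard : #M ≤ #B) (hle : ∀ m ∈ M, ∀ b ∈ B, g m ≤ g b) :
    ∑ m ∈ M, g m ≤ ∑ b ∈ B, g b := by
  rcases B.eq_empty_or_nonempty with rfl | hB
  · simp [card_eq_zero.mp (Nat.le_zero.mp hcard)]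
  obtain ⟨b₀, hb₀, hmin⟩ := B.exists_min_image g hB
  calc ∑ m ∈ M, g m ≤ #M • g b₀ := sum_le_card_nsmul _ _ _ fun m hm => hle m hm b₀ hb₀
    _ ≤ #B • g b₀ := by simp only [nsmul_eq_mul]; gcongr; exact hg b₀ hb₀
    _ ≤ ∑ b ∈ B, g b := card_nsmul_le_sum _ _ _ hmin

lemma sum_le_sum_of_card_le_of_forall_ne_le {α : Type*} [DecidableEq α] {g : α → ℝ}
    {M B : Finset α} {a : α} (hg : ∀ b ∈ B, 0 ≤ g b) (hcard : #M ≤ #B)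
    (hle : ∀ m ∈ M, m ≠ a → ∀ b ∈ B, g m ≤ g b) (ha : a ∈ M → ∃ b ∈ B, g a ≤ g b) :
    ∑ m ∈ M, g m ≤ ∑ b ∈ B, g b := by
  by_cases haM : a ∈ M
  · obtain ⟨b₀, hb₀, hab₀⟩ := ha haM
    rw [← add_sum_erase M g haM, ← add_sum_erase B g hb₀]
    refine add_le_add hab₀ (sum_le_sum_of_card_le_of_forall_le
      (fun b hb => hg b (mem_of_mem_erase hb)) ?_ ?_)
    · rw [card_erase_of_mem haM, card_erase_of_mem hb₀]; omega
    · exact fun m hm b hb => hle m (mem_of_mem_erase hm) (ne_of_mem_erase hm) b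
        (mem_of_mem_erase hb)
  · exact sum_le_sum_of_card_le_of_forall_le hg hcard
      fun m hm => hle m hm fun h => haM (h ▸ hm)

lemma sum_sdiff_le_sum_of_card_sdiff_le {α : Type*} [DecidableEq α] {g : α → ℝ}
    {I D R : Finset α} {a e₀ : α} (hg : ∀ e, 0 ≤ g e)
    (hD : D ⊆ I) (hR : R ⊆ I) (hcard : #(I \ D) ≤ #R)
    (hRmax : ∀ r ∈ R, ∀ s ∈ (I \ {a}) \ R, g s ≤ g r) (he₀ : e₀ ∈ D) (ha : g a ≤ g e₀) :
    ∑ e ∈ I \ R, g e ≤ ∑ e ∈ D, g e := by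
  set M := (I \ R) \ D
  set B := R ∩ D
  have hMB : #M ≤ #B := by
    have hdisj : Disjoint M (R \ D) :=
      disjoint_left.mpr fun e heM heR => (mem_sdiff.mp (mem_sdiff.mp heM).1).2 (mem_sdiff.mp heR).1
    have hunion : M ∪ (R \ D) ⊆ I \ D := by
      intro e he
      simp only [M, mem_union, mem_sdiff] at he ⊢
      rcases he with ⟨⟨hI, -⟩, hnD⟩ | ⟨hRe, hnD⟩
      exacts [⟨hI, hnD⟩, ⟨hR hRe, hnD⟩]
    have hsplitR : #B + #(R \ D) = #R := card_inter_add_card_sdiff R D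
    have := card_le_card hunion
    rw [card_union_of_disjoint hdisj] at this
    omega
  have hMB_sum : ∑ e ∈ M, g e ≤ ∑ e ∈ B, g e := by
    refine sum_le_sum_of_card_le_of_forall_ne_le (a := a) (fun b _ => hg b) hMB ?_ fun haM => ?_
    · intro m hm hma b hb
      simp only [M, mem_sdiff] at hm
      exact hRmax b (mem_inter.mp hb).1 m (by simp [hm.1.1, hma, hm.1.2])
    · by_cases he₀R : e₀ ∈ R
      · exact ⟨e₀, mem_inter.mpr ⟨he₀R, he₀⟩, ha⟩
      · have he₀a : e₀ ≠ a := by rintro rfl; exact (mem_sdiff.mp haM).2 he₀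
        obtain ⟨b, hb⟩ := card_pos.mp ((card_pos.mpr ⟨a, haM⟩).trans_le hMB)
        exact ⟨b, hb, ha.trans (hRmax b (mem_inter.mp hb).1 e₀ (by simp [hD he₀, he₀R, he₀a]))⟩
  have hID : (I \ R) ∩ D = D \ R := by
    ext e; simp only [mem_inter, mem_sdiff]; constructor
    · rintro ⟨⟨-, hnR⟩, hDe⟩; exact ⟨hDe, hnR⟩
    · rintro ⟨hDe, hnR⟩; exact ⟨⟨hD hDe, hnR⟩, hDe⟩
  calc ∑ e ∈ I \ R, g e = ∑ e ∈ D \ R, g e + ∑ e ∈ M, g e := by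
        rw [← hID, sum_inter_add_sum_sdiff]
    _ ≤ ∑ e ∈ D \ R, g e + ∑ e ∈ D ∩ R, g e := by rw [inter_comm]; gcongr
    _ = ∑ e ∈ D, g e := by rw [add_comm, sum_inter_add_sum_sdiff]

lemma Compatible.exists_mem_dom_not_mem {pc : PartialClustering d Δ k P}
    {Q : Fin k → Finset (HPt d)} {i j : Fin k} {Z : Finset (Fin d)} (h : Compatible pc Q i j Z)
    (hIj : pc.I j = ∅) {x : HPt d} (hx : x ∈ Q j) (hdom : (Dom x).Nonempty) :
    ∃ e ∈ Dom x, e ∉ Z :=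
  not_subset.mp <| h.1 x hx fun hsub => by
    rw [hIj, subset_empty] at hsub
    exact hdom.ne_empty hsub

lemma Compatible.dH_centers_le {pc : PartialClustering d Δ k P} {Q : Fin k → Finset (HPt d)}
    {i j : Fin k} {Z : Finset (Fin d)} (h : Compatible pc Q i j Z) {x : HPt d} (hx : x ∈ Q j)
    (hdom : Dom x ⊆ pc.I i) : dH x (centers pc Q j) ≤ 2 * dH x (pc.u i) := by
  have := not_lt.mp (h.2 x hx hdom)
  linarith

theorem stmt_12_general {d Δ k : ℕ}
    {P : Finset (HPt d)} (hP : ∀ y ∈ P, IsDeltaPt Δ y ∧ (Dom y).Nonempty)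
    (pc : PartialClustering d Δ k P)
    (Q : Fin k → Finset (HPt d)) (hQ : IsExtension pc Q)
    (i j : Fin k) (hIj : pc.I j = ∅)
    (Z : Finset (Fin d))
    (hcompat : Compatible pc Q i j Z)
    (imin : Fin d)
    (hminProp : ∀ e ∈ pc.I i \ Z,
      dI {imin} (pc.u i) (centers pc Q j) ≤ dI {e} (pc.u i) (centers pc Q j))
    (Rs : Finset (Fin d)) (hRsub : Rs ⊆ pc.I i \ {imin}) (hRcard : Rs.card = Δ)
    (hRmax : ∀ r ∈ Rs, ∀ s ∈ (pc.I i \ {imin}) \ Rs,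
      dI {s} (pc.u i) (centers pc Q j) ≤ dI {r} (pc.u i) (centers pc Q j))
    (dj : ℝ) (hdj : dj = dI (pc.I i \ Rs) (pc.u i) (centers pc Q j)) (hpos : 0 < dj) :
    ∀ x ∈ Q j, Dom x ⊆ pc.I i → dj / 4 < dH x (pc.u i) := by
  intro x hx hdom
  obtain ⟨hΔx, hdomx⟩ := hP x (hQ.2.1 j hx)
  obtain ⟨e₀, he₀, he₀Z⟩ := hcompat.exists_mem_dom_not_mem hIj hx hdomx
  have hsum := sum_sdiff_le_sum_of_card_sdiff_le (fun _ => coordSq_nonneg _ _) hdom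
    (hRsub.trans sdiff_subset) ((card_sdiff_dom_le_numMissing _ x).trans (hRcard ▸ hΔx))
    (fun r hr s hs => dI_singleton_le_iff.mp (hRmax r hr s hs)) he₀
    (dI_singleton_le_iff.mp (hminProp e₀ (mem_sdiff.mpr ⟨hdom he₀, he₀Z⟩)))
  have hdefined : ∀ e ∈ Dom x, x e ≠ none := fun e he => (mem_filter.mp he).2
  have hdj_le : dj ≤ 3 * dH x (pc.u i) :=
    calc dj ≤ dI (Dom x) (pc.u i) (centers pc Q j) := hdj ▸ Real.sqrt_le_sqrt hsum
      _ ≤ dI (Dom x) (pc.u i) x + dI (Dom x) x (centers pc Q j) := dI_triangle hdefined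
      _ ≤ dH x (pc.u i) + dH x (centers pc Q j) := by
        rw [dI_comm]; exact add_le_add (dI_le_dH _ _ _) (dI_le_dH _ _ _)
      _ ≤ 3 * dH x (pc.u i) := by linarith [hcompat.dH_centers_le hx hdom]
  linarith

/-- Claim 1 in Lemma 11: with a compatible set `Z_{i,j}`, points of
`P'_j` fully defined on `I_i` are far from `u_i`. -/
theorem stmt_12 {d Δ k : ℕ} (hd : 1 ≤ d) (hΔ : Δ < d) (hk : 1 ≤ k)
    {P : Finset (HPt d)} (hP : ∀ y ∈ P, IsDeltaPt Δ y ∧ (Dom y).Nonempty)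
    (pc : PartialClustering d Δ k P)
    (Q : Fin k → Finset (HPt d)) (hQ : IsExtension pc Q)
    (i j : Fin k) (hIi : Δ + 1 ≤ (pc.I i).card) (hIj : pc.I j = ∅)
    (Z : Finset (Fin d)) (hZsub : Z ⊆ pc.I i) (hZne : Z ≠ pc.I i)
    (hcompat : Compatible pc Q i j Z)
    (imin : Fin d) (himin : imin ∈ pc.I i \ Z)
    (hminProp : ∀ e ∈ pc.I i \ Z,
      dI {imin} (pc.u i) (centers pc Q j) ≤ dI {e} (pc.u i) (centers pc Q j))
    (Rs : Finset (Fin d)) (hRsub : Rs ⊆ pc.I i \ {imin}) (hRcard : Rs.card = Δ)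
    (hRmax : ∀ r ∈ Rs, ∀ s ∈ (pc.I i \ {imin}) \ Rs,
      dI {s} (pc.u i) (centers pc Q j) ≤ dI {r} (pc.u i) (centers pc Q j))
    (dj : ℝ) (hdj : dj = dI (pc.I i \ Rs) (pc.u i) (centers pc Q j)) (hpos : 0 < dj) :
    ∀ x ∈ Q j, Dom x ⊆ pc.I i → dj / 4 < dH x (pc.u i) :=
  stmt_12_general hP pc Q hQ i j hIj Z hcompat imin hminProp Rs hRsub hRcard hRmax dj hdj hpos

end KMD
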